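/- arXiv:2404.00581 — 2 statements merged into one kernel-verified Lean document; each statement's English description precedes it below -/
import Mathlib

section
/- Let 𝕌 be a composite theory of 𝕋 after 𝕊, with free algebra monads U, S, T, and let (TS, η^Tη^S, μ^{TS}) be the monad with μ^{TS} := φ ∘ μ^U ∘ (ψU ∘ TSψ) for the separation isomorphisms φ : U ⇒ TS, ψ : TS ⇒ U. Then the natural transformations η^T S : S ⇒ TS and Tη^S : T ⇒ TS are monad morphisms from S, respectively T, to this monad: each commutes with the units, and each satisfies the multiplication axiom (e.g. μ^{TS} ∘ (η^T S)(η^T S) = η^T S ∘ μ^S). -/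
/-! ## Algebraic signatures, terms and equational logic -/

/-- An algebraic signature: a set of operation symbols with arities. -/
structure Sgn where
  ops : Type
  ar : ops → ℕ

/-- Terms over a signature `σ` with variables in `X`. -/
inductive Trm (σ : Sgn) (X : Type) : Type
  | var : X → Trm σ X
  | op : (f : σ.ops) → (Fin (σ.ar f) → Trm σ X) → Trm σ X

/-- Simultaneous substitution. -/
def Trm.bind {σ : Sgn} {X Y : Type} : Trm σ X → (X → Trm σ Y) → Trm σ Y
  | .var x, g => g x
  | .op f k, g => .op f fun i => (k i).bind g

/-- Renaming of variables. -/
def Trm.rename {σ : Sgn} {X Y : Type} (f : X → Y) (t : Trm σ X) : Trm σ Y :=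
  t.bind fun x => .var (f x)

/-- Equations over `σ`: pairs of terms over the fixed countable set `ℕ` of variables. -/
abbrev Eqn (σ : Sgn) := Trm σ ℕ × Trm σ ℕ

/-- Derivability in equational logic from the set of axioms `E`
(axioms, reflexivity, symmetry, transitivity, congruence, substitution). -/
inductive Deriv {σ : Sgn} (E : Set (Eqn σ)) : {X : Type} → Trm σ X → Trm σ X → Prop
  | ax {X : Type} {e : Eqn σ} (he : e ∈ E) (g : ℕ → Trm σ X) :
      Deriv E (e.1.bind g) (e.2.bind g)
  | refl {X : Type} (t : Trm σ X) : Deriv E t t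
  | symm {X : Type} {s t : Trm σ X} : Deriv E s t → Deriv E t s
  | trans {X : Type} {s t u : Trm σ X} : Deriv E s t → Deriv E t u → Deriv E s u
  | congr {X : Type} (f : σ.ops) {k k' : Fin (σ.ar f) → Trm σ X} :
      (∀ i, Deriv E (k i) (k' i)) → Deriv E (.op f k) (.op f k')
  | subst {X Y : Type} {s t : Trm σ X} (g : X → Trm σ Y) :
      Deriv E s t → Deriv E (s.bind g) (t.bind g)

/-- An algebraic theory: a signature together with a set of equations. -/
structure Thy where
  sig : Sgn
  eqns : Set (Eqn sig)

/-! ## The free algebra monad -/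

/-- Carrier of the free algebra monad: terms modulo derivable equality. -/
def FreeM (σ : Sgn) (E : Set (Eqn σ)) (X : Type) : Type :=
  Quot (fun s t : Trm σ X => Deriv E s t)

/-- Equivalence class of a term. -/
def FreeM.mk {σ : Sgn} {E : Set (Eqn σ)} {X : Type} (t : Trm σ X) : FreeM σ E X :=
  Quot.mk _ t

/-- Functorial action of the free algebra monad. -/
noncomputable def FreeM.map {σ : Sgn} {E : Set (Eqn σ)} {X Y : Type}
    (f : X → Y) (q : FreeM σ E X) : FreeM σ E Y :=
  FreeM.mk ((Quot.out q).rename f)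

/-- Unit of the free algebra monad. -/
def FreeM.unit {σ : Sgn} {E : Set (Eqn σ)} {X : Type} (x : X) : FreeM σ E X :=
  FreeM.mk (.var x)

/-- Multiplication of the free algebra monad (flattening). -/
noncomputable def FreeM.mul {σ : Sgn} {E : Set (Eqn σ)} {X : Type}
    (q : FreeM σ E (FreeM σ E X)) : FreeM σ E X :=
  FreeM.mk ((Quot.out q).bind fun c => Quot.out c)

/-! ## Disjoint union of signatures and separated terms -/

/-- Disjoint union of two signatures. -/
def Sgn.sum (σ τ : Sgn) : Sgn := ⟨σ.ops ⊕ τ.ops, Sum.elim σ.ar τ.ar⟩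

/-- Embedding of `σ`-terms into terms over the sum signature. -/
def Trm.inl {σ τ : Sgn} {X : Type} : Trm σ X → Trm (σ.sum τ) X
  | .var x => .var x
  | .op f k => .op (Sum.inl f) fun i => (k i).inl

/-- Embedding of `τ`-terms into terms over the sum signature. -/
def Trm.inr {σ τ : Sgn} {X : Type} : Trm τ X → Trm (σ.sum τ) X
  | .var x => .var x
  | .op f k => .op (Sum.inr f) fun i => (k i).inr

/-- Flattening of a separated term `t[s_x/x]` (`τ`-term over `σ`-terms)
into a term over the sum signature. -/
def sepTS {σ τ : Sgn} {X : Type} (t : Trm τ (Trm σ X)) : Trm (σ.sum τ) X :=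
  (Trm.inr t).bind fun s => Trm.inl s

/-- Flattening of a mixed term `s[t_x/x]` (`σ`-term over `τ`-terms)
into a term over the sum signature. -/
def sepST {σ τ : Sgn} {X : Type} (s : Trm σ (Trm τ X)) : Trm (σ.sum τ) X :=
  (Trm.inl s).bind fun t => Trm.inr t

/-- The element `[t[[s_x]_𝕊/x]]_𝕋` of `TSX` determined by a separated term. -/
def clTS (SS TT : Thy) {X : Type} (t : Trm TT.sig (Trm SS.sig X)) :
    FreeM TT.sig TT.eqns (FreeM SS.sig SS.eqns X) :=
  FreeM.mk (t.rename FreeM.mk)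

/-- The element `[s[[t_x]_𝕋/x]]_𝕊` of `STX` determined by a mixed term. -/
def clST (SS TT : Thy) {X : Type} (s : Trm SS.sig (Trm TT.sig X)) :
    FreeM SS.sig SS.eqns (FreeM TT.sig TT.eqns X) :=
  FreeM.mk (s.rename FreeM.mk)

/-! ## Composite theories -/

/-- A composite theory of `TT` after `SS`: a theory on the disjoint union
of the signatures, containing both sets of equations, in which every term
has a separation, and separations are essentially unique. -/
structure Composite (SS TT : Thy) where
  eqns : Set (Eqn (SS.sig.sum TT.sig))
  containsS : ∀ e ∈ SS.eqns, ((Trm.inl e.1 : Trm (SS.sig.sum TT.sig) ℕ), Trm.inl e.2) ∈ eqns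
  containsT : ∀ e ∈ TT.eqns, ((Trm.inr e.1 : Trm (SS.sig.sum TT.sig) ℕ), Trm.inr e.2) ∈ eqns
  sepExists : ∀ u : Trm (SS.sig.sum TT.sig) ℕ,
      ∃ t : Trm TT.sig (Trm SS.sig ℕ), Deriv eqns u (sepTS t)
  sepUnique : ∀ t t' : Trm TT.sig (Trm SS.sig ℕ),
      Deriv eqns (sepTS t) (sepTS t') → clTS SS TT t = clTS SS TT t'

/-! ## Distributive laws between free algebra monads -/

/-- A distributive law `λ : ST ⇒ TS` between the free algebra monads of `SS` and `TT`. -/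
structure DistLaw (SS TT : Thy) where
  app : ∀ X : Type, FreeM SS.sig SS.eqns (FreeM TT.sig TT.eqns X) →
      FreeM TT.sig TT.eqns (FreeM SS.sig SS.eqns X)
  natural : ∀ (X Y : Type) (f : X → Y)
      (q : FreeM SS.sig SS.eqns (FreeM TT.sig TT.eqns X)),
      app Y (FreeM.map (FreeM.map f) q) = FreeM.map (FreeM.map f) (app X q)
  unitS : ∀ (X : Type) (q : FreeM TT.sig TT.eqns X),
      app X (FreeM.unit q) = FreeM.map FreeM.unit q
  unitT : ∀ (X : Type) (q : FreeM SS.sig SS.eqns X),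
      app X (FreeM.map FreeM.unit q) = FreeM.unit q
  mulS : ∀ (X : Type)
      (q : FreeM SS.sig SS.eqns (FreeM SS.sig SS.eqns (FreeM TT.sig TT.eqns X))),
      app X (FreeM.mul q) =
        FreeM.map FreeM.mul (app (FreeM SS.sig SS.eqns X) (FreeM.map (app X) q))
  mulT : ∀ (X : Type)
      (q : FreeM SS.sig SS.eqns (FreeM TT.sig TT.eqns (FreeM TT.sig TT.eqns X))),
      app X (FreeM.map FreeM.mul q) =
        FreeM.mul (FreeM.map (app X) (app (FreeM TT.sig TT.eqns X) q))

section Helpers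

namespace Trm

theorem bind_bind {σ : Sgn} {X Y Z : Type} (t : Trm σ X) (g : X → Trm σ Y)
    (h : Y → Trm σ Z) : (t.bind g).bind h = t.bind fun x => (g x).bind h := by
  induction t with
  | var x => rfl
  | op f k ih => simp only [Trm.bind]; exact congrArg _ (funext fun i => ih i)

theorem bind_var {σ : Sgn} {X : Type} (t : Trm σ X) : t.bind Trm.var = t := by
  induction t with
  | var x => rfl
  | op f k ih => simp only [Trm.bind]; exact congrArg _ (funext fun i => ih i)

theorem rename_bind {σ : Sgn} {X Y Z : Type} (t : Trm σ X) (f : X → Y)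
    (g : Y → Trm σ Z) : (t.rename f).bind g = t.bind fun x => g (f x) := by
  simp only [Trm.rename, bind_bind]; rfl

theorem rename_rename {σ : Sgn} {X Y Z : Type} (t : Trm σ X) (f : X → Y)
    (g : Y → Z) : (t.rename f).rename g = t.rename fun x => g (f x) :=
  rename_bind t f _

theorem bind_rename {σ : Sgn} {X Y Z : Type} (t : Trm σ X) (g : X → Trm σ Y)
    (f : Y → Z) : (t.bind g).rename f = t.bind fun x => (g x).rename f :=
  bind_bind t g _

theorem inl_bind {σ τ : Sgn} {X Y : Type} (t : Trm σ X) (g : X → Trm σ Y) :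
    Trm.inl (σ := σ) (τ := τ) (t.bind g) = (Trm.inl t).bind fun x => Trm.inl (g x) := by
  induction t with
  | var x => rfl
  | op f k ih => simp only [Trm.bind, Trm.inl]; exact congrArg _ (funext fun i => ih i)

theorem inr_bind {σ τ : Sgn} {X Y : Type} (t : Trm τ X) (g : X → Trm τ Y) :
    Trm.inr (σ := σ) (τ := τ) (t.bind g) = (Trm.inr t).bind fun x => Trm.inr (g x) := by
  induction t with
  | var x => rfl
  | op f k ih => simp only [Trm.bind, Trm.inr]; exact congrArg _ (funext fun i => ih i)

theorem inl_rename {σ τ : Sgn} {X Y : Type} (t : Trm σ X) (f : X → Y) :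
    Trm.inl (σ := σ) (τ := τ) (t.rename f) = (Trm.inl t).rename f := inl_bind t _

theorem inr_rename {σ τ : Sgn} {X Y : Type} (t : Trm τ X) (f : X → Y) :
    Trm.inr (σ := σ) (τ := τ) (t.rename f) = (Trm.inr t).rename f := inr_bind t _

end Trm

theorem sepTS_rename_var {σ τ : Sgn} {X : Type} (t : Trm τ X) :
    sepTS (σ := σ) (t.rename Trm.var) = Trm.inr t := by
  induction t with
  | var x => rfl
  | op f k ih =>
      simp only [Trm.rename, Trm.bind, sepTS, Trm.inr] at *
      exact congrArg _ (funext fun i => ih i)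

theorem derivOfEq {σ : Sgn} {E : Set (Eqn σ)} {X : Type} {s t : Trm σ X}
    (h : FreeM.mk (E := E) s = FreeM.mk t) : Deriv E s t := by
  have h' := (Quot.eq (r := fun s t : Trm σ X => Deriv E s t)).mp h
  clear h
  induction h' with
  | rel _ _ h => exact h
  | refl => exact Deriv.refl _
  | symm _ _ _ ih => exact ih.symm
  | trans _ _ _ _ _ ih1 ih2 => exact ih1.trans ih2

theorem out_deriv {σ : Sgn} {E : Set (Eqn σ)} {X : Type} (t : Trm σ X) :
    Deriv E (Quot.out (FreeM.mk (E := E) t)) t :=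
  derivOfEq (Quot.out_eq _)

theorem bindCongr {σ : Sgn} {E : Set (Eqn σ)} {X Y : Type} (t : Trm σ X)
    {g g' : X → Trm σ Y} (h : ∀ x, Deriv E (g x) (g' x)) :
    Deriv E (t.bind g) (t.bind g') := by
  induction t with
  | var x => exact h x
  | op f k ih => exact Deriv.congr f ih

theorem map_mk {σ : Sgn} {E : Set (Eqn σ)} {X Y : Type} (f : X → Y) (t : Trm σ X) :
    FreeM.map (E := E) f (FreeM.mk t) = FreeM.mk (t.rename f) :=
  Quot.sound (Deriv.subst _ (out_deriv t))

theorem mul_mk {σ : Sgn} {E : Set (Eqn σ)} {X : Type} (t : Trm σ (FreeM σ E X)) :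
    FreeM.mul (FreeM.mk t) = FreeM.mk (t.bind Quot.out) :=
  Quot.sound (Deriv.subst _ (out_deriv t))

end Helpers

theorem FreeM.mk_out {σ : Sgn} {E : Set (Eqn σ)} {X : Type} (q : FreeM σ E X) :
    FreeM.mk (E := E) (Quot.out q) = q := Quot.out_eq q

/-! ## Statement 3: `η^T S` and `Tη^S` are monad morphisms into `TS` -/

/-- The composite functor `TS`. -/
abbrev TSobj (SS TT : Thy) (X : Type) : Type :=
  FreeM TT.sig TT.eqns (FreeM SS.sig SS.eqns X)

/-- The unit `η^{TS} := η^T η^S`. -/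
def etaTS (SS TT : Thy) (X : Type) (x : X) : TSobj SS TT X :=
  FreeM.unit (FreeM.unit x)

/-- The multiplication `μ^{TS} := φ ∘ μ^U ∘ (ψU ∘ TSψ)`. -/
noncomputable def muTS (SS TT : Thy) (U : Composite SS TT)
    (φ : ∀ X : Type, FreeM (SS.sig.sum TT.sig) U.eqns X → TSobj SS TT X)
    (ψ : ∀ X : Type, TSobj SS TT X → FreeM (SS.sig.sum TT.sig) U.eqns X)
    (X : Type) (q : TSobj SS TT (TSobj SS TT X)) : TSobj SS TT X :=
  φ X (FreeM.mul (ψ (FreeM (SS.sig.sum TT.sig) U.eqns X)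
    (FreeM.map (FreeM.map (ψ X)) q)))

/-- The natural transformation `η^T S : S ⇒ TS`. -/
def thetaS (SS TT : Thy) (X : Type) (q : FreeM SS.sig SS.eqns X) : TSobj SS TT X :=
  FreeM.unit q

/-- The natural transformation `Tη^S : T ⇒ TS`. -/
noncomputable def thetaT (SS TT : Thy) (X : Type) (q : FreeM TT.sig TT.eqns X) :
    TSobj SS TT X :=
  FreeM.map FreeM.unit q

/-- For the composite monad `(TS, η^Tη^S, μ^{TS})` obtained from a composite theory,
the natural transformations `η^T S : S ⇒ TS` and `Tη^S : T ⇒ TS` are monad morphisms: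
each commutes with the units and satisfies the multiplication axiom. -/
theorem etaTS_and_TetaS_monad_morphisms (SS TT : Thy) (U : Composite SS TT)
    (φ : ∀ X : Type, FreeM (SS.sig.sum TT.sig) U.eqns X → TSobj SS TT X)
    (ψ : ∀ X : Type, TSobj SS TT X → FreeM (SS.sig.sum TT.sig) U.eqns X)
    (hφ : ∀ (X : Type) (u : Trm (SS.sig.sum TT.sig) X) (t : Trm TT.sig (Trm SS.sig X)),
        Deriv U.eqns u (sepTS t) → φ X (FreeM.mk u) = clTS SS TT t)
    (hψ : ∀ (X : Type) (t : Trm TT.sig (Trm SS.sig X)),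
        ψ X (clTS SS TT t) = FreeM.mk (sepTS t))
    (hφnat : ∀ (X Y : Type) (f : X → Y) (q : FreeM (SS.sig.sum TT.sig) U.eqns X),
        φ Y (FreeM.map f q) = FreeM.map (FreeM.map f) (φ X q))
    (hψnat : ∀ (X Y : Type) (f : X → Y) (q : TSobj SS TT X),
        ψ Y (FreeM.map (FreeM.map f) q) = FreeM.map f (ψ X q))
    (hinv : ∀ X : Type, Function.LeftInverse (ψ X) (φ X) ∧
        Function.RightInverse (ψ X) (φ X)) :
    -- η^T S commutes with the units: (η^T S) ∘ η^S = η^{TS}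
    (∀ (X : Type) (x : X), thetaS SS TT X (FreeM.unit x) = etaTS SS TT X x) ∧
    -- η^T S multiplication axiom: μ^{TS} ∘ (η^T S)(η^T S) = (η^T S) ∘ μ^S
    (∀ (X : Type) (q : FreeM SS.sig SS.eqns (FreeM SS.sig SS.eqns X)),
        thetaS SS TT X (FreeM.mul q) =
          muTS SS TT U φ ψ X
            (thetaS SS TT (TSobj SS TT X) (FreeM.map (thetaS SS TT X) q))) ∧
    -- Tη^S commutes with the units: (Tη^S) ∘ η^T = η^{TS}
    (∀ (X : Type) (x : X), thetaT SS TT X (FreeM.unit x) = etaTS SS TT X x) ∧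
    -- Tη^S multiplication axiom: μ^{TS} ∘ (Tη^S)(Tη^S) = (Tη^S) ∘ μ^T
    (∀ (X : Type) (q : FreeM TT.sig TT.eqns (FreeM TT.sig TT.eqns X)),
        thetaT SS TT X (FreeM.mul q) =
          muTS SS TT U φ ψ X
            (thetaT SS TT (TSobj SS TT X) (FreeM.map (thetaT SS TT X) q))) := by
  refine ⟨fun X x => rfl, ?_, ?_, ?_⟩
  · -- η^T S multiplication axiom
    intro X q
    obtain ⟨t0, rfl⟩ : ∃ t, q = FreeM.mk t := ⟨Quot.out q, (Quot.out_eq q).symm⟩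
    have hA : ∀ a : FreeM SS.sig SS.eqns X,
        ψ X (thetaS SS TT X a) = (FreeM.mk (Trm.inl (Quot.out a)) : FreeM (SS.sig.sum TT.sig) U.eqns X) := by
      intro a
      have h1 : thetaS SS TT X a = clTS SS TT (Trm.var (Quot.out a)) := by
        conv_lhs => rw [← FreeM.mk_out a]
        rfl
      rw [h1, hψ]
      rfl
    have hE1 : thetaS SS TT (TSobj SS TT X) (FreeM.map (thetaS SS TT X) (FreeM.mk t0))
        = FreeM.mk (Trm.var (FreeM.mk (t0.rename (thetaS SS TT X)))) := by
      rw [map_mk]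
      rfl
    have hE2 : FreeM.map (FreeM.map (ψ X))
          ((FreeM.mk (Trm.var (FreeM.mk (t0.rename (thetaS SS TT X)))) :
            TSobj SS TT (TSobj SS TT X)))
        = (FreeM.mk (Trm.var (FreeM.mk
            (t0.rename fun a => (FreeM.mk (Trm.inl (Quot.out a)) : FreeM (SS.sig.sum TT.sig) U.eqns X)))) :
            TSobj SS TT (FreeM (SS.sig.sum TT.sig) U.eqns X)) := by
      rw [map_mk]
      have h0 : ((Trm.var (FreeM.mk (t0.rename (thetaS SS TT X))) :
            Trm TT.sig (FreeM SS.sig SS.eqns (TSobj SS TT X))).rename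
            (FreeM.map (ψ X) (E := SS.eqns)))
          = Trm.var (FreeM.map (ψ X) (FreeM.mk (t0.rename (thetaS SS TT X)))) := rfl
      rw [h0, map_mk, Trm.rename_rename]
      exact congrArg (fun v => FreeM.mk (Trm.var (FreeM.mk (Trm.rename v t0))))
        (funext hA)
    have hE3 : ψ (FreeM (SS.sig.sum TT.sig) U.eqns X)
          ((FreeM.mk (Trm.var (FreeM.mk
            (t0.rename fun a => (FreeM.mk (Trm.inl (Quot.out a)) : FreeM (SS.sig.sum TT.sig) U.eqns X)))) :
            TSobj SS TT (FreeM (SS.sig.sum TT.sig) U.eqns X)))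
        = FreeM.mk (Trm.inl (t0.rename fun a => (FreeM.mk (Trm.inl (Quot.out a)) : FreeM (SS.sig.sum TT.sig) U.eqns X))) := by
      have hcl : (FreeM.mk (Trm.var (FreeM.mk
            (t0.rename fun a => (FreeM.mk (Trm.inl (Quot.out a)) : FreeM (SS.sig.sum TT.sig) U.eqns X)))) :
              TSobj SS TT (FreeM (SS.sig.sum TT.sig) U.eqns X))
          = clTS SS TT (Trm.var (t0.rename fun a => (FreeM.mk (Trm.inl (Quot.out a)) : FreeM (SS.sig.sum TT.sig) U.eqns X))) :=
        rfl
      rw [hcl, hψ]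
      rfl
    have hder : Deriv U.eqns
        ((Trm.inl (t0.rename fun a => (FreeM.mk (Trm.inl (Quot.out a)) : FreeM (SS.sig.sum TT.sig) U.eqns X))).bind Quot.out)
        (sepTS (Trm.var (t0.bind Quot.out))) := by
      show Deriv U.eqns _ (Trm.inl (t0.bind Quot.out))
      erw [Trm.inl_rename, Trm.rename_bind, Trm.inl_bind]
      exact bindCongr _ fun a => out_deriv _
    simp only [muTS]
    rw [hE1, hE2, hE3, mul_mk, mul_mk, hφ X _ (Trm.var (t0.bind Quot.out)) hder]
    rfl
  · -- Tη^S commutes with the units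
    intro X x
    have h0 : (FreeM.unit x : FreeM TT.sig TT.eqns X) = FreeM.mk (Trm.var x) := rfl
    simp only [thetaT]
    rw [h0, map_mk]
    rfl
  · -- Tη^S multiplication axiom
    intro X q
    obtain ⟨t0, rfl⟩ : ∃ t, q = FreeM.mk t := ⟨Quot.out q, (Quot.out_eq q).symm⟩
    have hB : ∀ a : FreeM TT.sig TT.eqns X,
        ψ X (thetaT SS TT X a) = (FreeM.mk (Trm.inr (Quot.out a)) : FreeM (SS.sig.sum TT.sig) U.eqns X) := by
      intro a
      conv_lhs => rw [← FreeM.mk_out a]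
      simp only [thetaT]
      rw [map_mk]
      have h1 : FreeM.mk (E := TT.eqns) ((Quot.out a).rename FreeM.unit)
          = clTS SS TT ((Quot.out a).rename Trm.var) := by
        simp only [clTS]
        rw [Trm.rename_rename]
        rfl
      rw [h1, hψ, sepTS_rename_var]
    have hE1 : thetaT SS TT (TSobj SS TT X) (FreeM.map (thetaT SS TT X) (FreeM.mk t0))
        = (FreeM.mk (t0.rename fun a => FreeM.unit (thetaT SS TT X a)) :
            TSobj SS TT (TSobj SS TT X)) := by
      simp only [thetaT]
      rw [map_mk, map_mk, Trm.rename_rename]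
      rfl
    have hv : ∀ a : FreeM TT.sig TT.eqns X,
        FreeM.map (ψ X) ((FreeM.unit (thetaT SS TT X a) :
            FreeM SS.sig SS.eqns (TSobj SS TT X)))
          = (FreeM.unit ((FreeM.mk (Trm.inr (Quot.out a)) :
              FreeM (SS.sig.sum TT.sig) U.eqns X)) :
            FreeM SS.sig SS.eqns (FreeM (SS.sig.sum TT.sig) U.eqns X)) := by
      intro a
      have h0 : (FreeM.unit (thetaT SS TT X a) :
            FreeM SS.sig SS.eqns (TSobj SS TT X))
          = FreeM.mk (Trm.var (thetaT SS TT X a)) := rfl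
      rw [h0, map_mk]
      have h2 : ((Trm.var (thetaT SS TT X a)).rename (ψ X) :
            Trm SS.sig (FreeM (SS.sig.sum TT.sig) U.eqns X))
          = Trm.var (ψ X (thetaT SS TT X a)) := rfl
      rw [h2, hB a]
      rfl
    have hE2 : FreeM.map (FreeM.map (ψ X))
          ((FreeM.mk (t0.rename fun a => FreeM.unit (thetaT SS TT X a)) :
            TSobj SS TT (TSobj SS TT X)))
        = (FreeM.mk (t0.rename fun a =>
            FreeM.unit ((FreeM.mk (Trm.inr (Quot.out a)) : FreeM (SS.sig.sum TT.sig) U.eqns X))) :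
            TSobj SS TT (FreeM (SS.sig.sum TT.sig) U.eqns X)) := by
      rw [map_mk, Trm.rename_rename]
      exact congrArg (fun v => FreeM.mk (Trm.rename v t0)) (funext hv)
    have hE3 : ψ (FreeM (SS.sig.sum TT.sig) U.eqns X)
          ((FreeM.mk (t0.rename fun a => FreeM.unit ((FreeM.mk (Trm.inr (Quot.out a)) : FreeM (SS.sig.sum TT.sig) U.eqns X))) :
            TSobj SS TT (FreeM (SS.sig.sum TT.sig) U.eqns X)))
        = FreeM.mk ((Trm.inr t0).rename fun a => (FreeM.mk (Trm.inr (Quot.out a)) : FreeM (SS.sig.sum TT.sig) U.eqns X)) := by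
      have hcl : (FreeM.mk (t0.rename fun a =>
            FreeM.unit ((FreeM.mk (Trm.inr (Quot.out a)) : FreeM (SS.sig.sum TT.sig) U.eqns X))) :
              TSobj SS TT (FreeM (SS.sig.sum TT.sig) U.eqns X))
          = clTS SS TT (t0.rename fun a =>
              Trm.var ((FreeM.mk (Trm.inr (Quot.out a)) : FreeM (SS.sig.sum TT.sig) U.eqns X))) := by
        simp only [clTS]
        erw [Trm.rename_rename]
        rfl
      rw [hcl, hψ]
      have h5 := sepTS_rename_var (σ := SS.sig)
        (t0.rename fun a => (FreeM.mk (Trm.inr (Quot.out a)) : FreeM (SS.sig.sum TT.sig) U.eqns X))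
      erw [Trm.rename_rename] at h5
      erw [h5, Trm.inr_rename]
      rfl
    have hder : Deriv U.eqns
        (((Trm.inr t0).rename fun a => (FreeM.mk (Trm.inr (Quot.out a)) : FreeM (SS.sig.sum TT.sig) U.eqns X)).bind Quot.out)
        (sepTS ((t0.bind Quot.out).rename Trm.var)) := by
      erw [sepTS_rename_var, Trm.rename_bind, Trm.inr_bind]
      exact bindCongr _ fun a => out_deriv _
    simp only [muTS]
    rw [hE1, hE2, hE3, mul_mk, mul_mk, hφ X _ ((t0.bind Quot.out).rename Trm.var) hder]
    simp only [thetaT, clTS]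
    rw [map_mk, Trm.rename_rename]
    rfl
end

section
/- Let 𝕊 and 𝕋 be algebraic theories with free algebra monads S and T. For any two separated terms t[s_x/x] (with x ranging over X = var(t)) and t'[s'_y/y] (with y ranging over Y = var(t')), the following are equivalent: (1) [t[[s_x]_𝕊/x]]_𝕋 = [t'[[s'_y]_𝕊/y]]_𝕋 in TS𝒱; (2) there exist a set Z, functions h : X → Z and h' : Y → Z, and a family of Σ_𝕊-terms (s*_z)_{z ∈ Z} such that t[h] =_𝕋 t'[h'], s_x =_𝕊 s*_{h(x)} for all x ∈ X, and s'_y =_𝕊 s*_{h'(y)} for all y ∈ Y. -/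
/-!
Equality in `TS𝒱` of two classes is `𝕋`-derivability of the underlying `Σ_𝕋`-terms over `S𝒱`.
So from left to right one takes `Z = S𝒱` itself, `h`, `h'` the class maps and `s*` a choice of
representatives; from right to left both renamings factor through `h`, `h'` followed by the
class map of `s*`, and derivations are stable under renaming.
-/

theorem Deriv.equivalence {σ : Sgn} (E : Set (Eqn σ)) (X : Type) :
    Equivalence (Deriv E : Trm σ X → Trm σ X → Prop) :=
  ⟨Deriv.refl, Deriv.symm, Deriv.trans⟩

theorem Deriv.rename {σ : Sgn} {E : Set (Eqn σ)} {X Y : Type} {a b : Trm σ X} (f : X → Y)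
    (h : Deriv E a b) : Deriv E (a.rename f) (b.rename f) :=
  Deriv.subst _ h

theorem FreeM.mk_eq_mk_iff {σ : Sgn} {E : Set (Eqn σ)} {X : Type} {a b : Trm σ X} :
    (FreeM.mk a : FreeM σ E X) = FreeM.mk b ↔ Deriv E a b :=
  Quot.eq.trans (Deriv.equivalence E X).eqvGen_iff

theorem FreeM.deriv_out_mk {σ : Sgn} {E : Set (Eqn σ)} {X : Type} (a : Trm σ X) :
    Deriv E a (Quot.out (FreeM.mk a : FreeM σ E X)) :=
  FreeM.mk_eq_mk_iff.mp (Quot.out_eq _).symm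

theorem Trm.bind_bind_s5 {σ : Sgn} {X Y Z : Type} (t : Trm σ X) (f : X → Trm σ Y)
    (g : Y → Trm σ Z) : (t.bind f).bind g = t.bind fun x => (f x).bind g := by
  induction t with
  | var x => rfl
  | op f k ih => simp only [Trm.bind, ih]

theorem Trm.rename_rename_s5 {σ : Sgn} {X Y Z : Type} (t : Trm σ X) (f : X → Y) (g : Y → Z) :
    (t.rename f).rename g = t.rename (g ∘ f) :=
  Trm.bind_bind_s5 _ _ _

/-- For separated terms `t[s_x/x]` (variables of `t` ranging over `A`) and
`t'[s'_y/y]` (variables ranging over `B`), equality of the corresponding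
equivalence classes in `TS𝒱` is equivalent to the existence of a set `Z`,
functions `h : A → Z`, `h' : B → Z` and a family of `𝕊`-terms `(s*_z)_{z ∈ Z}`
with `t[h] =_𝕋 t'[h']`, `s_x =_𝕊 s*_{h(x)}` and `s'_y =_𝕊 s*_{h'(y)}`. -/
theorem equal_modulo_ST_iff (SS TT : Thy) {A B : Type}
    (t : Trm TT.sig A) (s : A → Trm SS.sig ℕ)
    (t' : Trm TT.sig B) (s' : B → Trm SS.sig ℕ) :
    (FreeM.mk (t.rename fun a => (FreeM.mk (s a) : FreeM SS.sig SS.eqns ℕ)) :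
        FreeM TT.sig TT.eqns (FreeM SS.sig SS.eqns ℕ)) =
      FreeM.mk (t'.rename fun b => FreeM.mk (s' b)) ↔
    ∃ (Z : Type) (h : A → Z) (h' : B → Z) (sstar : Z → Trm SS.sig ℕ),
      Deriv TT.eqns (t.rename h) (t'.rename h') ∧
      (∀ a, Deriv SS.eqns (s a) (sstar (h a))) ∧
      (∀ b, Deriv SS.eqns (s' b) (sstar (h' b))) := by
  constructor
  · intro heq
    exact ⟨FreeM SS.sig SS.eqns ℕ, fun a => FreeM.mk (s a), fun b => FreeM.mk (s' b),
      Quot.out, FreeM.mk_eq_mk_iff.mp heq, fun a => FreeM.deriv_out_mk (s a),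
      fun b => FreeM.deriv_out_mk (s' b)⟩
  · rintro ⟨Z, h, h', sstar, hT, hs, hs'⟩
    have hfac : (fun a => (FreeM.mk (s a) : FreeM SS.sig SS.eqns ℕ)) =
        (fun z => FreeM.mk (sstar z)) ∘ h :=
      funext fun a => FreeM.mk_eq_mk_iff.mpr (hs a)
    have hfac' : (fun b => (FreeM.mk (s' b) : FreeM SS.sig SS.eqns ℕ)) =
        (fun z => FreeM.mk (sstar z)) ∘ h' :=
      funext fun b => FreeM.mk_eq_mk_iff.mpr (hs' b)
    rw [hfac, hfac', ← Trm.rename_rename_s5, ← Trm.rename_rename_s5]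
    exact FreeM.mk_eq_mk_iff.mpr (hT.rename _)
end
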